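/- arXiv:2503.07130 — 7 statements merged into one kernel-verified Lean document; each statement's English description precedes it below -/
import Mathlib

section
/- For any sets of cliques x, y ⊆ Coh(G), the implication satisfies x↓ → y↓ = (x↓ → y↓)↓ = x → y↓; in particular the implication of two observations is again an observation. -/
/-- A set of vertices is a clique when its elements are pairwise coherent. -/
def IsClique {V : Type*} (coh : V → V → Prop) (x : Set V) : Prop :=
  ∀ a ∈ x, ∀ b ∈ x, coh a b

/-- The coherence space: the set of cliques of the graph. -/
def Coh {V : Type*} (coh : V → V → Prop) : Set (Set V) :=
  {x | IsClique coh x}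

/-- Down-closure (w.r.t. superset, within cliques) of a set of cliques. -/
def dcl {V : Type*} (coh : V → V → Prop) (x : Set (Set V)) : Set (Set V) :=
  {α | IsClique coh α ∧ ∃ β ∈ x, β ⊆ α}

/-- An observation: a down-closed set of cliques. -/
def IsObs {V : Type*} (coh : V → V → Prop) (x : Set (Set V)) : Prop :=
  x ⊆ Coh coh ∧ ∀ α β : Set V, β ∈ x → β ⊆ α → IsClique coh α → α ∈ x

/-- Heyting implication of sets of cliques. -/
def oimpl {V : Type*} (coh : V → V → Prop) (x y : Set (Set V)) : Set (Set V) :=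
  {α | IsClique coh α ∧ ∀ β ∈ x, IsClique coh (α ∪ β) → α ∪ β ∈ y}

/-!
Enlarging α only enlarges each α ∪ β, so an implication into an observation is again an
observation, and an observation is its own down-closure. Testing against x↓ instead of x changes
nothing: each β ∈ x↓ contains some γ ∈ x, and α ∪ γ ∈ z forces α ∪ β ∈ z when z is an
observation.
-/

section

variable {V : Type*} {coh : V → V → Prop}

theorem IsClique.mono {a b : Set V} (h : a ⊆ b) (hb : IsClique coh b) : IsClique coh a :=
  fun p hp q hq => hb p (h hp) q (h hq)

theorem isObs_dcl (x : Set (Set V)) : IsObs coh (dcl coh x) :=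
  ⟨fun _ hα => hα.1, fun _ _ ⟨_, γ, hγ, hγβ⟩ hβα hα => ⟨hα, γ, hγ, hγβ.trans hβα⟩⟩

theorem IsObs.dcl_eq {x : Set (Set V)} (hx : IsObs coh x) : dcl coh x = x := by
  ext α
  constructor
  · rintro ⟨hα, β, hβ, hβα⟩
    exact hx.2 α β hβ hβα hα
  · intro hα
    exact ⟨hx.1 hα, α, hα, subset_rfl⟩

theorem isObs_oimpl {u v : Set (Set V)} (hv : IsObs coh v) : IsObs coh (oimpl coh u v) := by
  refine ⟨fun _ hα => hα.1, ?_⟩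
  rintro α β ⟨-, hβ⟩ hβα hα
  refine ⟨hα, fun γ hγ hαγ => ?_⟩
  have hβγα : β ∪ γ ⊆ α ∪ γ := Set.union_subset_union_left γ hβα
  exact hv.2 _ _ (hβ γ hγ (hαγ.mono hβγα)) hβγα hαγ

theorem oimpl_dcl_left {x z : Set (Set V)} (hz : IsObs coh z) :
    oimpl coh (dcl coh x) z = oimpl coh x z := by
  ext α
  constructor
  · rintro ⟨hα, himp⟩
    refine ⟨hα, fun β hβ hαβ => himp β ⟨hαβ.mono Set.subset_union_right, β, hβ, subset_rfl⟩ hαβ⟩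
  · rintro ⟨hα, himp⟩
    refine ⟨hα, ?_⟩
    rintro β ⟨-, γ, hγ, hγβ⟩ hαβ
    have hαγβ : α ∪ γ ⊆ α ∪ β := Set.union_subset_union_right α hγβ
    exact hz.2 _ _ (himp γ hγ (hαβ.mono hαγβ)) hαγβ hαβ

end

theorem impl_closure_general {V : Type*} (coh : V → V → Prop)
    (x y : Set (Set V)) :
    oimpl coh (dcl coh x) (dcl coh y) = dcl coh (oimpl coh (dcl coh x) (dcl coh y)) ∧
    oimpl coh (dcl coh x) (dcl coh y) = oimpl coh x (dcl coh y) ∧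
    (∀ u v : Set (Set V), IsObs coh u → IsObs coh v → IsObs coh (oimpl coh u v)) :=
  ⟨(isObs_oimpl (isObs_dcl y)).dcl_eq.symm, oimpl_dcl_left (isObs_dcl y),
    fun _ _ _ hv => isObs_oimpl hv⟩

theorem impl_closure {V : Type*} (coh : V → V → Prop)
    (hsymm : ∀ a b, coh a b → coh b a) (hrefl : ∀ a, coh a a)
    (x y : Set (Set V)) (hx : x ⊆ Coh coh) (hy : y ⊆ Coh coh) :
    oimpl coh (dcl coh x) (dcl coh y) = dcl coh (oimpl coh (dcl coh x) (dcl coh y)) ∧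
    oimpl coh (dcl coh x) (dcl coh y) = oimpl coh x (dcl coh y) ∧
    (∀ u v : Set (Set V), IsObs coh u → IsObs coh v → IsObs coh (oimpl coh u v)) :=
  impl_closure_general coh x y
end

section
/- Obs(G) with union, intersection, ∅, Coh(G), and the implication x → y := {α | ∀β ∈ x, α ∪ β ∈ Coh ⇒ α ∪ β ∈ y} is a Heyting algebra; i.e. for all observations x, y, z: x ∩ y ⊆ z if and only if x ⊆ (y → z). -/
theorem IsObs.mem_of_subset {V : Type*} {coh : V → V → Prop} {x : Set (Set V)} {α β : Set V}
    (hx : IsObs coh x) (hβ : β ∈ x) (hβα : β ⊆ α) (hα : IsClique coh α) : α ∈ x :=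
  hx.2 α β hβ hβα hα

theorem subset_oimpl_of_inter_subset {V : Type*} {coh : V → V → Prop} {x y z : Set (Set V)}
    (hx : IsObs coh x) (hy : IsObs coh y) (h : x ∩ y ⊆ z) : x ⊆ oimpl coh y z :=
  fun _ hα => ⟨hx.1 hα, fun _ hβ hαβ =>
    h ⟨hx.mem_of_subset hα Set.subset_union_left hαβ,
      hy.mem_of_subset hβ Set.subset_union_right hαβ⟩⟩

theorem inter_subset_of_subset_oimpl {V : Type*} {coh : V → V → Prop} {x y z : Set (Set V)}
    (h : x ⊆ oimpl coh y z) : x ∩ y ⊆ z := by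
  intro α ⟨hαx, hαy⟩
  obtain ⟨hα, himpl⟩ := h hαx
  simpa only [Set.union_self] using himpl α hαy (by rwa [Set.union_self])

theorem obs_heyting_general {V : Type*} (coh : V → V → Prop)
    (x y z : Set (Set V)) (hx : IsObs coh x) (hy : IsObs coh y) :
    x ∩ y ⊆ z ↔ x ⊆ oimpl coh y z :=
  ⟨subset_oimpl_of_inter_subset hx hy, inter_subset_of_subset_oimpl⟩

theorem obs_heyting {V : Type*} (coh : V → V → Prop)
    (hsymm : ∀ a b, coh a b → coh b a) (hrefl : ∀ a, coh a a)
    (x y z : Set (Set V)) (hx : IsObs coh x) (hy : IsObs coh y) (hz : IsObs coh z) :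
    x ∩ y ⊆ z ↔ x ⊆ oimpl coh y z :=
  obs_heyting_general coh x y z hx hy
end

section
/- For every lattice term s over a coherence graph G, the observation semantics of s equals the down-closure of the finite cliques in its disjunctive-normal-form set: ⟦s⟧ = ({x ∈ [s] | x is a finite clique})↓. -/
/-- Lattice terms over atomic observations. -/
inductive Tlat (V : Type*) where
  | atom : V → Tlat V
  | top : Tlat V
  | bot : Tlat V
  | and : Tlat V → Tlat V → Tlat V
  | or : Tlat V → Tlat V → Tlat V

/-- Observation semantics of lattice terms. -/
def sem {V : Type*} (coh : V → V → Prop) : Tlat V → Set (Set V)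
  | .atom a => dcl coh {{a}}
  | .top => Coh coh
  | .bot => ∅
  | .or s t => sem coh s ∪ sem coh t
  | .and s t => sem coh s ∩ sem coh t

/-- The DNF set-interpretation of lattice terms. -/
def brack {V : Type*} : Tlat V → Set (Set V)
  | .atom a => {{a}}
  | .top => {∅}
  | .bot => ∅
  | .or s t => brack s ∪ brack t
  | .and s t => Set.image2 (· ∪ ·) (brack s) (brack t)

/-! Both sides are down-closures: `⟦·⟧` commutes with `∨` and `∧` exactly as `dcl` turns unions into
unions and pairwise unions into intersections, so `⟦s⟧ = [s]↓` by induction on `s`. Every member of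
`[s]` is finite, and a set lying below a clique is itself a clique, so restricting `[s]` to finite
cliques does not change its down-closure. -/

section DownClosure

variable {V : Type*} {coh : V → V → Prop}

lemma IsClique.subset {x y : Set V} (h : IsClique coh y) (hxy : x ⊆ y) : IsClique coh x :=
  fun a ha b hb => h a (hxy ha) b (hxy hb)

lemma dcl_empty : dcl coh ∅ = ∅ := by
  simp [dcl]

lemma dcl_singleton_empty : dcl coh {∅} = Coh coh := by
  ext α
  simp [dcl, Coh]

lemma dcl_union (X Y : Set (Set V)) : dcl coh (X ∪ Y) = dcl coh X ∪ dcl coh Y := by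
  ext α
  simp only [dcl, Set.mem_union, Set.mem_ofPred_eq, or_and_right, exists_or, and_or_left]

lemma dcl_image2_union (X Y : Set (Set V)) :
    dcl coh (Set.image2 (· ∪ ·) X Y) = dcl coh X ∩ dcl coh Y := by
  ext α
  constructor
  · rintro ⟨hα, _, ⟨β, hβ, γ, hγ, rfl⟩, hβγα⟩
    exact ⟨⟨hα, β, hβ, Set.union_subset_iff.1 hβγα |>.1⟩,
      ⟨hα, γ, hγ, Set.union_subset_iff.1 hβγα |>.2⟩⟩
  · rintro ⟨⟨hα, β, hβ, hβα⟩, ⟨-, γ, hγ, hγα⟩⟩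
    exact ⟨hα, β ∪ γ, Set.mem_image2_of_mem hβ hγ, Set.union_subset hβα hγα⟩

lemma dcl_sep_isClique (X : Set (Set V)) : dcl coh {x ∈ X | IsClique coh x} = dcl coh X := by
  ext α
  constructor
  · rintro ⟨hα, β, ⟨hβ, -⟩, hβα⟩
    exact ⟨hα, β, hβ, hβα⟩
  · rintro ⟨hα, β, hβ, hβα⟩
    exact ⟨hα, β, ⟨hβ, hα.subset hβα⟩, hβα⟩

end DownClosure

lemma finite_of_mem_brack {V : Type*} {s : Tlat V} {x : Set V} (hx : x ∈ brack s) : x.Finite := by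
  induction s generalizing x with
  | atom a => rw [brack, Set.mem_singleton_iff] at hx; exact hx ▸ Set.finite_singleton a
  | top => rw [brack, Set.mem_singleton_iff] at hx; exact hx ▸ Set.finite_empty
  | bot => exact absurd hx (Set.notMem_empty x)
  | or s t ihs iht => exact hx.elim ihs iht
  | and s t ihs iht =>
    obtain ⟨β, hβ, γ, hγ, rfl⟩ := hx
    exact (ihs hβ).union (iht hγ)

lemma sem_eq_dcl {V : Type*} (coh : V → V → Prop) (s : Tlat V) : sem coh s = dcl coh (brack s) := by
  induction s with
  | atom a => rfl
  | top => exact dcl_singleton_empty.symm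
  | bot => exact dcl_empty.symm
  | or s t ihs iht => rw [sem, brack, dcl_union, ihs, iht]
  | and s t ihs iht => rw [sem, brack, dcl_image2_union, ihs, iht]

theorem sem_eq_dcl_brack_general {V : Type*} (coh : V → V → Prop)
    (s : Tlat V) :
    sem coh s = dcl coh {x ∈ brack s | x.Finite ∧ IsClique coh x} := by
  have hfinite : {x ∈ brack s | x.Finite ∧ IsClique coh x} = {x ∈ brack s | IsClique coh x} := by
    ext x
    exact and_congr_right fun hx => and_iff_right (finite_of_mem_brack hx)
  rw [hfinite, dcl_sep_isClique, sem_eq_dcl]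

theorem sem_eq_dcl_brack {V : Type*} (coh : V → V → Prop)
    (hsymm : ∀ a b, coh a b → coh b a) (hrefl : ∀ a, coh a a)
    (s : Tlat V) :
    sem coh s = dcl coh {x ∈ brack s | x.Finite ∧ IsClique coh x} :=
  sem_eq_dcl_brack_general coh s
end

section
/- Equational completeness for observation lattices: for lattice terms s, t over a coherence graph G, ⟦s⟧ ⊆ ⟦t⟧ holds if and only if s ≤ t is derivable from the axioms of bounded distributive lattices together with the axiom a ∧ b ≡ ⊥ for each incoherent pair a, b of vertices. -/
/-- The congruence generated by the bounded distributive lattice axioms together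
with `a ∧ b ≡ ⊥` for each incoherent pair `a, b`. -/
inductive eqv {V : Type*} (coh : V → V → Prop) : Tlat V → Tlat V → Prop
  | refl (s) : eqv coh s s
  | symm {s t} : eqv coh s t → eqv coh t s
  | trans {s t u} : eqv coh s t → eqv coh t u → eqv coh s u
  | congr_or {s s' t t'} : eqv coh s s' → eqv coh t t' → eqv coh (.or s t) (.or s' t')
  | congr_and {s s' t t'} : eqv coh s s' → eqv coh t t' → eqv coh (.and s t) (.and s' t')
  | or_assoc (s t u) : eqv coh (.or s (.or t u)) (.or (.or s t) u)
  | or_comm (s t) : eqv coh (.or s t) (.or t s)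
  | or_bot (s) : eqv coh (.or s .bot) s
  | and_assoc (s t u) : eqv coh (.and s (.and t u)) (.and (.and s t) u)
  | and_comm (s t) : eqv coh (.and s t) (.and t s)
  | and_top (s) : eqv coh (.and s .top) s
  | absorb_and (s t) : eqv coh (.and s (.or s t)) s
  | absorb_or (s t) : eqv coh (.or s (.and s t)) s
  | distrib (s t u) : eqv coh (.and s (.or t u)) (.or (.and s t) (.and s u))
  | incoh (a b) : ¬ coh a b → eqv coh (.and (.atom a) (.atom b)) .bot


/-!
Soundness is checked rule by rule on the semantics. For completeness, bring `s` into disjunctive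
normal form `⋁ᵢ ⋀ Cᵢ`; it suffices to show `⋀ C ≤ t` for each disjunct. If two atoms of `C` are
incoherent, `⋀ C ≡ ⊥` by the incoherence axiom. Otherwise the atoms of `C` form a clique, which lies
in `⟦s⟧ ⊆ ⟦t⟧`; since a clique lies in `⟦t⟧` exactly when it contains all atoms of some disjunct `D`
of the normal form of `t`, we get `⋀ C ≤ ⋀ D ≤ t`.
-/

notation:50 s " ⊑[" coh "] " t:51 => eqv coh (Tlat.or s t) t

theorem sem_subset_coh {V : Type*} {coh : V → V → Prop} (u : Tlat V) : sem coh u ⊆ Coh coh := by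
  induction u with
  | atom => exact fun _ h => h.1
  | top => exact subset_rfl
  | bot => exact Set.empty_subset _
  | and _ _ ih _ => exact Set.inter_subset_left.trans ih
  | or _ _ ihs iht => exact Set.union_subset ihs iht

namespace eqv

variable {V : Type*} {coh : V → V → Prop}

theorem bot_or (u : Tlat V) : eqv coh (.or .bot u) u :=
  .trans (.or_comm _ _) (.or_bot u)

theorem or_self (u : Tlat V) : eqv coh (.or u u) u :=
  .trans (.congr_or (.refl _) (.symm (.and_top u))) (.absorb_or u .top)

theorem and_self (u : Tlat V) : eqv coh (.and u u) u :=
  .trans (.congr_and (.refl _) (.symm (.or_bot u))) (.absorb_and u .bot)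

theorem bot_and (u : Tlat V) : eqv coh (.and .bot u) .bot :=
  .trans (.congr_and (.refl _) (.symm (bot_or u))) (.absorb_and .bot u)

theorem and_bot (u : Tlat V) : eqv coh (.and u .bot) .bot :=
  .trans (.and_comm _ _) (bot_and u)

theorem top_and (u : Tlat V) : eqv coh (.and .top u) u :=
  .trans (.and_comm _ _) (.and_top u)

theorem or_distrib (s t u : Tlat V) :
    eqv coh (.and (.or s t) u) (.or (.and s u) (.and t u)) :=
  .trans (.and_comm _ _) (.trans (.distrib u s t) (.congr_or (.and_comm _ _) (.and_comm _ _)))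

theorem bot_le (u : Tlat V) : .bot ⊑[coh] u :=
  bot_or u

theorem le_trans {s t u : Tlat V} (hst : s ⊑[coh] t) (htu : t ⊑[coh] u) : s ⊑[coh] u :=
  .trans (.congr_or (.refl s) (.symm htu))
    (.trans (.or_assoc s t u) (.trans (.congr_or hst (.refl u)) htu))

theorem le_of_and_eqv {s t : Tlat V} (h : eqv coh (.and s t) s) : s ⊑[coh] t :=
  .trans (.or_comm _ _) <| .trans (.congr_or (.refl t) (.symm h)) <|
    .trans (.congr_or (.refl t) (.and_comm s t)) (.absorb_or t s)

theorem le_of_eqv_of_le {s s' t : Tlat V} (hs : eqv coh s s') (h : s' ⊑[coh] t) : s ⊑[coh] t :=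
  .trans (.congr_or hs (.refl t)) h

theorem le_of_le_of_eqv {s t t' : Tlat V} (h : s ⊑[coh] t') (ht : eqv coh t t') : s ⊑[coh] t :=
  .trans (.congr_or (.refl s) ht) (.trans h (.symm ht))

theorem sem_eq {s t : Tlat V} (h : eqv coh s t) : sem coh s = sem coh t := by
  induction h with
  | refl => rfl
  | symm _ ih => exact ih.symm
  | trans _ _ ih₁ ih₂ => exact ih₁.trans ih₂
  | congr_or _ _ ih₁ ih₂ | congr_and _ _ ih₁ ih₂ => simp only [sem, ih₁, ih₂]
  | or_assoc => exact (Set.union_assoc _ _ _).symm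
  | or_comm => exact Set.union_comm _ _
  | or_bot => exact Set.union_empty _
  | and_assoc => exact (Set.inter_assoc _ _ _).symm
  | and_comm => exact Set.inter_comm _ _
  | and_top s => exact Set.inter_eq_left.mpr (sem_subset_coh s)
  | absorb_and => exact inf_sup_self
  | absorb_or => exact sup_inf_self
  | distrib => exact Set.inter_union_distrib_left _ _ _
  | incoh a b hab =>
    refine Set.eq_empty_of_forall_notMem ?_
    rintro α ⟨⟨hα, -, rfl, ha⟩, -, -, rfl, hb⟩
    exact hab (hα a (ha rfl) b (hb rfl))

end eqv

namespace Tlat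

variable {V : Type*} {coh : V → V → Prop}

def conj : List V → Tlat V
  | [] => .top
  | a :: C => .and (.atom a) (conj C)

def disj : List (List V) → Tlat V
  | [] => .bot
  | C :: L => .or (conj C) (disj L)

def dnf : Tlat V → List (List V)
  | .atom a => [[a]]
  | .top => [[]]
  | .bot => []
  | .or s t => dnf s ++ dnf t
  | .and s t => (dnf s).flatMap fun C => (dnf t).map (C ++ ·)

theorem conj_append (C D : List V) : eqv coh (conj (C ++ D)) (.and (conj C) (conj D)) := by
  induction C with
  | nil => exact .symm (.top_and _)
  | cons a C ih => exact .trans (.congr_and (.refl _) ih) (.and_assoc _ _ _)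

theorem disj_append (L M : List (List V)) : eqv coh (disj (L ++ M)) (.or (disj L) (disj M)) := by
  induction L with
  | nil => exact .symm (.bot_or _)
  | cons C L ih => exact .trans (.congr_or (.refl _) ih) (.or_assoc _ _ _)

theorem conj_and_disj (C : List V) (M : List (List V)) :
    eqv coh (.and (conj C) (disj M)) (disj (M.map (C ++ ·))) := by
  induction M with
  | nil => exact .and_bot _
  | cons D M ih => exact .trans (.distrib _ _ _) (.congr_or (.symm (conj_append C D)) ih)

theorem disj_and_disj (L M : List (List V)) :
    eqv coh (.and (disj L) (disj M)) (disj (L.flatMap fun C => M.map (C ++ ·))) := by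
  induction L with
  | nil => exact .bot_and _
  | cons C L ih =>
    exact .trans (.or_distrib _ _ _) <|
      .trans (.congr_or (conj_and_disj C M) ih) (.symm (disj_append _ _))

theorem eqv_disj_dnf (u : Tlat V) : eqv coh u (disj (dnf u)) := by
  induction u with
  | atom => exact .symm (.trans (.or_bot _) (.and_top _))
  | top => exact .symm (.or_bot _)
  | bot => exact .refl _
  | and _ _ ihs iht => exact .trans (.congr_and ihs iht) (disj_and_disj _ _)
  | or _ _ ihs iht => exact .trans (.congr_or ihs iht) (.symm (disj_append _ _))

theorem conj_eqv_and_atom {a : V} {C : List V} (ha : a ∈ C) :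
    eqv coh (conj C) (.and (.atom a) (conj C)) := by
  induction C with
  | nil => simp at ha
  | cons c C ih =>
    rcases List.mem_cons.mp ha with rfl | ha
    · exact .symm (.trans (.and_assoc _ _ _) (.congr_and (.and_self _) (.refl _)))
    · refine .trans (.congr_and (.refl _) (ih ha)) (.trans (.and_assoc _ _ _) ?_)
      exact .trans (.congr_and (.and_comm _ _) (.refl _)) (.symm (.and_assoc _ _ _))

theorem conj_le_conj {C D : List V} (h : D ⊆ C) : conj C ⊑[coh] conj D := by
  refine .le_of_and_eqv ?_
  induction D with
  | nil => exact .and_top _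
  | cons d D ih =>
    refine .trans (.and_assoc _ _ _) <|
      .trans (.congr_and ?_ (.refl _)) (ih (List.cons_subset.mp h).2)
    exact .trans (.and_comm _ _) (.symm (conj_eqv_and_atom (h List.mem_cons_self)))

theorem conj_le_disj {C : List V} {L : List (List V)} (h : C ∈ L) : conj C ⊑[coh] disj L := by
  induction L with
  | nil => simp at h
  | cons D L ih =>
    rcases List.mem_cons.mp h with rfl | h
    · exact .trans (.or_assoc _ _ _) (.congr_or (.or_self _) (.refl _))
    · refine .trans (.or_assoc _ _ _) (.trans (.congr_or (.or_comm _ _) (.refl _)) ?_)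
      exact .trans (.symm (.or_assoc _ _ _)) (.congr_or (.refl _) (ih h))

theorem disj_le {L : List (List V)} {t : Tlat V} (h : ∀ C ∈ L, conj C ⊑[coh] t) :
    disj L ⊑[coh] t := by
  induction L with
  | nil => exact .bot_le t
  | cons C L ih =>
    refine .trans (.symm (.or_assoc _ _ _)) ?_
    exact .trans (.congr_or (.refl _) (ih fun D hD => h D (List.mem_cons_of_mem C hD)))
      (h C List.mem_cons_self)

theorem conj_eqv_bot {a b : V} {C : List V} (ha : a ∈ C) (hb : b ∈ C) (hab : ¬ coh a b) :
    eqv coh (conj C) .bot :=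
  .trans (conj_eqv_and_atom ha) <| .trans (.congr_and (.refl _) (conj_eqv_and_atom hb)) <|
    .trans (.and_assoc _ _ _) <| .trans (.congr_and (.incoh a b hab) (.refl _)) (.bot_and _)

theorem mem_sem_iff {u : Tlat V} {α : Set V} :
    α ∈ sem coh u ↔ IsClique coh α ∧ ∃ C ∈ dnf u, ∀ a ∈ C, a ∈ α := by
  induction u generalizing α with
  | atom => simp [sem, dcl, dnf]
  | top => simp [sem, Coh, dnf]
  | bot => simp [sem, dnf]
  | or _ _ ihs iht =>
    simp only [sem, Set.mem_union, ihs, iht, dnf, List.mem_append]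
    grind
  | and _ _ ihs iht =>
    simp only [sem, Set.mem_inter_iff, ihs, iht, dnf, List.mem_flatMap, List.mem_map]
    grind

end Tlat

theorem obs_lattice_completeness_general {V : Type*} (coh : V → V → Prop)
    (s t : Tlat V) :
    sem coh s ⊆ sem coh t ↔ eqv coh (.or s t) t := by
  refine ⟨fun hst => ?_, fun h => h.sem_eq ▸ Set.subset_union_left⟩
  refine .le_of_eqv_of_le (Tlat.eqv_disj_dnf s) (Tlat.disj_le fun C hC => ?_)
  by_cases hclique : IsClique coh {a | a ∈ C}
  · have hC_sem : {a | a ∈ C} ∈ sem coh s := Tlat.mem_sem_iff.mpr ⟨hclique, C, hC, fun _ => id⟩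
    obtain ⟨-, D, hD, hDC⟩ := Tlat.mem_sem_iff.mp (hst hC_sem)
    exact .le_trans (Tlat.conj_le_conj hDC)
      (.le_of_le_of_eqv (Tlat.conj_le_disj hD) (Tlat.eqv_disj_dnf t))
  · obtain ⟨a, ha, b, hb, hab⟩ : ∃ a ∈ C, ∃ b ∈ C, ¬ coh a b := by
      simpa [IsClique] using hclique
    exact .le_of_eqv_of_le (Tlat.conj_eqv_bot ha hb hab) (.bot_le t)

theorem obs_lattice_completeness {V : Type*} (coh : V → V → Prop)
    (hsymm : ∀ a b, coh a b → coh b a) (hrefl : ∀ a, coh a a)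
    (s t : Tlat V) :
    sem coh s ⊆ sem coh t ↔ eqv coh (.or s t) t :=
  obs_lattice_completeness_general coh s t
end

section
/- In the observation algebra over a coherence graph, implication out of (the observation generated by) a single clique distributes over disjunction: ({α}↓ → (x ∪ y)) = ({α}↓ → x) ∪ ({α}↓ → y) for any clique α and observations x, y. -/
/-! Since `{α}↓` has the least element `α`, whether a clique `γ` lies in `{α}↓ → z` is decided by
the single test `γ ∪ α ∈ z`; the union of observations then distributes over this test. -/

section

variable {V : Type*} {coh : V → V → Prop}

theorem IsClique.subset_s12 {s t : Set V} (ht : IsClique coh t) (hst : s ⊆ t) : IsClique coh s :=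
  fun a ha b hb => ht a (hst ha) b (hst hb)

theorem mem_dcl_singleton_self {α : Set V} (hα : IsClique coh α) : α ∈ dcl coh {α} :=
  ⟨hα, α, rfl, subset_rfl⟩

theorem IsObs.union {x y : Set (Set V)} (hx : IsObs coh x) (hy : IsObs coh y) :
    IsObs coh (x ∪ y) :=
  ⟨Set.union_subset hx.1 hy.1, fun α β hβ hβα hα =>
    hβ.imp (fun hβx => hx.2 α β hβx hβα hα) (fun hβy => hy.2 α β hβy hβα hα)⟩

theorem mem_oimpl_dcl_singleton_iff {α γ : Set V} (hα : IsClique coh α) {z : Set (Set V)}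
    (hz : IsObs coh z) :
    γ ∈ oimpl coh (dcl coh {α}) z ↔ IsClique coh γ ∧ (IsClique coh (γ ∪ α) → γ ∪ α ∈ z) := by
  refine ⟨fun ⟨hγ, h⟩ => ⟨hγ, h α (mem_dcl_singleton_self hα)⟩, fun ⟨hγ, h⟩ => ⟨hγ, ?_⟩⟩
  rintro β ⟨-, δ, hδ : δ = α, hαβ⟩ hγβ
  subst δ
  have hγα : γ ∪ α ⊆ γ ∪ β := Set.union_subset_union_right γ hαβ
  exact hz.2 _ _ (h (hγβ.subset_s12 hγα)) hγα hγβ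

end

theorem impl_singleton_distrib_union_general {V : Type*} (coh : V → V → Prop)
    (α : Set V) (hα : IsClique coh α)
    (x y : Set (Set V)) (hx : IsObs coh x) (hy : IsObs coh y) :
    oimpl coh (dcl coh {α}) (x ∪ y) =
      oimpl coh (dcl coh {α}) x ∪ oimpl coh (dcl coh {α}) y := by
  ext γ
  simp only [Set.mem_union, mem_oimpl_dcl_singleton_iff hα (hx.union hy),
    mem_oimpl_dcl_singleton_iff hα hx, mem_oimpl_dcl_singleton_iff hα hy]
  tauto

theorem impl_singleton_distrib_union {V : Type*} (coh : V → V → Prop)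
    (hsymm : ∀ a b, coh a b → coh b a) (hrefl : ∀ a, coh a a)
    (α : Set V) (hα : IsClique coh α)
    (x y : Set (Set V)) (hx : IsObs coh x) (hy : IsObs coh y) :
    oimpl coh (dcl coh {α}) (x ∪ y) =
      oimpl coh (dcl coh {α}) x ∪ oimpl coh (dcl coh {α}) y :=
  impl_singleton_distrib_union_general coh α hα x y hx hy
end

section
/- In a graph with the finite anti-neighbourhood property, for any finite clique α, the pseudocomplement of {α}↓ equals the down-closure of the set of singleton cliques {a} where a is incoherent with some element of α: ({α}↓ → ∅) = ({{a} | ∃b ∈ α, ¬(a coh b)})↓. -/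
/-! A clique `γ` lies in the pseudocomplement of `{α}↓` exactly when `γ ∪ α` is not a clique,
since every clique above `α` contains `α`. For two cliques, failing to be coherent together means
some `a ∈ γ` is incoherent with some `b ∈ α`, i.e. `γ` lies above the singleton `{a}`. -/

section

variable {V : Type*} {coh : V → V → Prop}

theorem IsClique.anti {x y : Set V} (hy : IsClique coh y) (hxy : x ⊆ y) : IsClique coh x :=
  fun a ha b hb => hy a (hxy ha) b (hxy hb)

theorem mem_oimpl_dcl_singleton_empty_iff {α γ : Set V} (hα : IsClique coh α) :
    γ ∈ oimpl coh (dcl coh {α}) ∅ ↔ IsClique coh γ ∧ ¬ IsClique coh (γ ∪ α) := by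
  refine and_congr_right fun _ => ⟨fun h hγα => h α ⟨hα, α, rfl, subset_rfl⟩ hγα, ?_⟩
  rintro hγα β ⟨-, _, rfl, hαβ⟩ hγβ
  exact hγα (hγβ.anti (Set.union_subset_union_right γ hαβ))

theorem not_isClique_union_iff (hsymm : ∀ a b, coh a b → coh b a) {γ α : Set V}
    (hγ : IsClique coh γ) (hα : IsClique coh α) :
    ¬ IsClique coh (γ ∪ α) ↔ ∃ a ∈ γ, ∃ b ∈ α, ¬ coh a b := by
  constructor
  · intro h
    simp only [IsClique, not_forall] at h
    obtain ⟨a, ha, b, hb, hab⟩ := h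
    rcases ha with ha | ha <;> rcases hb with hb | hb
    · exact absurd (hγ a ha b hb) hab
    · exact ⟨a, ha, b, hb, hab⟩
    · exact ⟨b, hb, a, ha, fun hba => hab (hsymm b a hba)⟩
    · exact absurd (hα a ha b hb) hab
  · rintro ⟨a, ha, b, hb, hab⟩ h
    exact hab (h a (Or.inl ha) b (Or.inr hb))

theorem mem_dcl_singletons_iff {p : V → Prop} {γ : Set V} :
    γ ∈ dcl coh {s | ∃ a, s = {a} ∧ p a} ↔ IsClique coh γ ∧ ∃ a ∈ γ, p a := by
  simp only [dcl, Set.mem_ofPred_eq]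
  refine and_congr_right fun _ => ⟨?_, ?_⟩
  · rintro ⟨_, ⟨a, rfl, ha⟩, haγ⟩
    exact ⟨a, Set.singleton_subset_iff.1 haγ, ha⟩
  · rintro ⟨a, haγ, ha⟩
    exact ⟨{a}, ⟨a, rfl, ha⟩, Set.singleton_subset_iff.2 haγ⟩

end

theorem fan_pseudocomplement_clique_general {V : Type*} (coh : V → V → Prop)
    (hsymm : ∀ a b, coh a b → coh b a)
    (α : Set V) (hα : IsClique coh α) :
    oimpl coh (dcl coh {α}) ∅ =
      dcl coh {s : Set V | ∃ a : V, s = {a} ∧ ∃ b ∈ α, ¬ coh a b} := by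
  ext γ
  rw [mem_oimpl_dcl_singleton_empty_iff hα, mem_dcl_singletons_iff]
  exact and_congr_right fun hγ => not_isClique_union_iff hsymm hγ hα

theorem fan_pseudocomplement_clique {V : Type*} (coh : V → V → Prop)
    (hsymm : ∀ a b, coh a b → coh b a) (hrefl : ∀ a, coh a a)
    (hfan : ∀ a : V, {b : V | ¬ coh a b}.Finite)
    (α : Set V) (hα : IsClique coh α) (hfin : α.Finite) :
    oimpl coh (dcl coh {α}) ∅ =
      dcl coh {s : Set V | ∃ a : V, s = {a} ∧ ∃ b ∈ α, ¬ coh a b} :=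
  fan_pseudocomplement_clique_general coh hsymm α hα
end

section
/- In the infinite anticlique graph Ω, for any nonempty set A ⊆ ω, the double pseudocomplement of x := {{a} | a ∈ A} satisfies (x → ∅) → ∅ = x provided A is also not all of ω; in particular double negation is the identity on nontrivial singleton-generated observations. -/
/-!
For the anticlique `(· = ·)` the cliques are exactly the subsingletons, and two singletons
`{a}`, `{b}` are compatible only when `a = b`. Hence the pseudocomplement of the observation
generated by the singletons of a nonempty set `B` is the observation generated by the singletons
of `Bᶜ` (nonemptiness of `B` is what excludes the empty clique). Applying this to `A` and then to the nonempty set `Aᶜ` gives back `A`.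
-/

theorem isClique_eq_iff_subsingleton {V : Type*} {s : Set V} :
    IsClique (· = ·) s ↔ s.Subsingleton :=
  Iff.rfl

theorem isClique_eq_singleton_union_singleton {V : Type*} {a b : V} :
    IsClique (· = ·) ({a} ∪ {b}) ↔ a = b := by
  refine ⟨fun h => h a (by simp) b (by simp), ?_⟩
  rintro rfl
  simp [isClique_eq_iff_subsingleton]

theorem oimpl_eq_singletons_empty {V : Type*} {B : Set V} (hB : B.Nonempty) :
    oimpl (· = · : V → V → Prop) {s : Set V | ∃ a ∈ B, s = {a}} ∅ =
      {s : Set V | ∃ a ∈ Bᶜ, s = {a}} := by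
  ext α
  simp only [oimpl, Set.mem_ofPred_eq, Set.mem_empty_iff_false, imp_false, forall_exists_index,
    and_imp, isClique_eq_iff_subsingleton]
  constructor
  · rintro ⟨hα, hincompat⟩
    obtain ⟨a, ha⟩ := hB
    obtain rfl | ⟨v, rfl⟩ := hα.eq_empty_or_singleton
    · exact absurd (by simp) (hincompat _ a ha rfl)
    · exact ⟨v, fun hv => hincompat _ v hv rfl (by simp), rfl⟩
  · rintro ⟨v, hv, rfl⟩
    refine ⟨Set.subsingleton_singleton, ?_⟩
    rintro _ a ha rfl hva
    exact hv (isClique_eq_singleton_union_singleton.mp hva ▸ ha)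

theorem anticlique_double_negation_general {V : Type*}
    (A : Set V) (hA : A.Nonempty) (hA' : A ≠ Set.univ) :
    oimpl (· = · : V → V → Prop)
        (oimpl (· = ·) {s : Set V | ∃ a ∈ A, s = {a}} ∅) ∅ =
      {s : Set V | ∃ a ∈ A, s = {a}} := by
  rw [oimpl_eq_singletons_empty hA, oimpl_eq_singletons_empty (Set.nonempty_compl.mpr hA'),
    compl_compl]

theorem anticlique_double_negation {V : Type*} [Infinite V]
    (A : Set V) (hA : A.Nonempty) (hA' : A ≠ Set.univ) :
    oimpl (· = · : V → V → Prop)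
        (oimpl (· = ·) {s : Set V | ∃ a ∈ A, s = {a}} ∅) ∅ =
      {s : Set V | ∃ a ∈ A, s = {a}} :=
  anticlique_double_negation_general A hA hA'
end
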